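/- Let G and H be additive commutative groups, ψ: G → H a surjective group homomorphism, and R a G-graded commutative ring. If the ψ-coarsening R_[ψ] is steady (every small H-graded R_[ψ]-module is finitely generated), then R is steady (every small G-graded R-module is finitely generated). -/

import Mathlib

/-!
Common vocabulary: internally graded rings and modules, coarsening of gradings,
graded morphisms, and derived notions (injectivity, cogenerators, smallness, ...),
following Rohrer, "Coarsenings, injectives and Hom functors".
-/

open DirectSum

section Defs

variable {G H R : Type} [AddCommGroup G] [AddCommGroup H] [CommRing R]

/-- The `ψ`-coarsening of a `G`-grading: `(ℳ_[ψ])_h = ⨁_{g ∈ ψ⁻¹(h)} ℳ_g`. -/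
def coarsen {M : Type} [AddCommGroup M] (ψ : G →+ H) (ℳ : G → AddSubgroup M) (h : H) :
    AddSubgroup M :=
  ⨆ g ∈ ψ ⁻¹' {h}, ℳ g

/-- `(R, 𝒜)` is a `G`-graded commutative ring: the `𝒜 g` are additive subgroups whose
internal direct sum is `R`, and `𝒜 g * 𝒜 h ⊆ 𝒜 (g + h)`. -/
def IsGradedRing (𝒜 : G → AddSubgroup R) : Prop :=
  (1 : R) ∈ 𝒜 0 ∧
  (∀ {g h : G} {a b : R}, a ∈ 𝒜 g → b ∈ 𝒜 h → a * b ∈ 𝒜 (g + h)) ∧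
  (letI := Classical.decEq G; DirectSum.IsInternal 𝒜)

/-- `(M, ℳ)` is a `G`-graded module over the `G`-graded ring `(R, 𝒜)`. -/
def IsGradedModule {M : Type} [AddCommGroup M] [Module R M]
    (𝒜 : G → AddSubgroup R) (ℳ : G → AddSubgroup M) : Prop :=
  (∀ {g h : G} {r : R} {m : M}, r ∈ 𝒜 g → m ∈ ℳ h → r • m ∈ ℳ (g + h)) ∧
  (letI := Classical.decEq G; DirectSum.IsInternal ℳ)

/-- A morphism of `G`-graded `R`-modules is an `R`-linear map respecting the gradings. -/
def IsGradedHom {M N : Type} [AddCommGroup M] [Module R M]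
    [AddCommGroup N] [Module R N] (ℳ : G → AddSubgroup M) (𝒩 : G → AddSubgroup N)
    (f : M →ₗ[R] N) : Prop :=
  ∀ g : G, ∀ m ∈ ℳ g, f m ∈ 𝒩 g

/-- The grading of a direct sum of graded modules:
`(⨁_i N_i)_g` consists of the elements all of whose components lie in degree `g`. -/
def directSumGrading {ι : Type} {M : ι → Type}
    [∀ i, AddCommGroup (M i)] (ℳ : ∀ i, G → AddSubgroup (M i)) (g : G) :
    AddSubgroup (⨁ i, M i) where
  carrier := {x | ∀ i, x i ∈ ℳ i g}
  zero_mem' := fun i => by simp only [DirectSum.zero_apply, ZeroMemClass.zero_mem]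
  add_mem' := fun {x y} hx hy i => by
    rw [DirectSum.add_apply]; exact add_mem (hx i) (hy i)
  neg_mem' := fun {x} hx i => by
    rw [DFinsupp.neg_apply]; exact neg_mem (hx i)

/-- `(E, ℰ)` is an injective object of the category of `G`-graded `R`-modules:
every graded morphism into `E` extends along every injective graded morphism. -/
def IsInjectiveGradedModule (𝒜 : G → AddSubgroup R) {E : Type} [AddCommGroup E] [Module R E]
    (ℰ : G → AddSubgroup E) : Prop :=
  ∀ (A B : Type) [AddCommGroup A] [Module R A] [AddCommGroup B] [Module R B],
    ∀ (𝒮A : G → AddSubgroup A) (𝒮B : G → AddSubgroup B),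
      IsGradedModule 𝒜 𝒮A → IsGradedModule 𝒜 𝒮B →
      ∀ i : A →ₗ[R] B, Function.Injective i → IsGradedHom 𝒮A 𝒮B i →
      ∀ f : A →ₗ[R] E, IsGradedHom 𝒮A ℰ f →
      ∃ g : B →ₗ[R] E, IsGradedHom 𝒮B ℰ g ∧ g ∘ₗ i = f

/-- `(M, ℳ)` is a cogenerator of the category of `G`-graded `R`-modules: every nonzero
graded morphism is detected by a graded morphism into `M`. -/
def IsCogenerator (𝒜 : G → AddSubgroup R) {M : Type} [AddCommGroup M] [Module R M]
    (ℳ : G → AddSubgroup M) : Prop :=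
  ∀ (N N' : Type) [AddCommGroup N] [Module R N] [AddCommGroup N'] [Module R N'],
    ∀ (𝒩 : G → AddSubgroup N) (𝒩' : G → AddSubgroup N'),
      IsGradedModule 𝒜 𝒩 → IsGradedModule 𝒜 𝒩' →
      ∀ u : N →ₗ[R] N', IsGradedHom 𝒩 𝒩' u → u ≠ 0 →
      ∃ v : N' →ₗ[R] M, IsGradedHom 𝒩' ℳ v ∧ v ∘ₗ u ≠ 0

/-- `M` is a small graded module: every graded morphism from `M` into a direct sum of
graded modules factors through a finite sub-sum. -/
def IsSmall (𝒜 : G → AddSubgroup R) {M : Type} [AddCommGroup M] [Module R M]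
    (ℳ : G → AddSubgroup M) : Prop :=
  ∀ (ι : Type) (N : ι → Type) [∀ i, AddCommGroup (N i)] [∀ i, Module R (N i)],
    ∀ (𝒩 : ∀ i, G → AddSubgroup (N i)), (∀ i, IsGradedModule 𝒜 (𝒩 i)) →
      ∀ f : M →ₗ[R] ⨁ i, N i, IsGradedHom ℳ (directSumGrading 𝒩) f →
        ∃ s : Finset ι, ∀ (m : M) (i : ι), i ∉ s → f m i = 0

/-- `M` is `P`-small: every graded morphism from `M` into a direct sum of copies of `P`
factors through a finite sub-sum. -/
def IsSmallWrt {P : Type} [AddCommGroup P] [Module R P] (𝒬 : G → AddSubgroup P)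
    {M : Type} [AddCommGroup M] [Module R M] (ℳ : G → AddSubgroup M) : Prop :=
  ∀ (ι : Type) (f : M →ₗ[R] ⨁ (_ : ι), P),
    IsGradedHom ℳ (directSumGrading fun (_ : ι) => 𝒬) f →
      ∃ s : Finset ι, ∀ (m : M) (i : ι), i ∉ s → f m i = 0

/-- A `G`-graded ring is steady if all small graded modules over it are finitely generated. -/
def IsSteady (𝒜 : G → AddSubgroup R) : Prop :=
  ∀ (M : Type) [AddCommGroup M] [Module R M], ∀ ℳ : G → AddSubgroup M,
    IsGradedModule 𝒜 ℳ → IsSmall 𝒜 ℳ → Module.Finite R M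

/-- A graded ideal of the `G`-graded ring `(R, 𝒜)`: `I = ⨁_g (I ∩ R_g)`. -/
def IsGradedIdeal (𝒜 : G → AddSubgroup R) (I : Ideal R) : Prop :=
  I.toAddSubgroup = ⨆ g : G, I.toAddSubgroup ⊓ 𝒜 g

/-- A simple `G`-graded `R`-module: nonzero, and its only graded submodules are `0` and
the whole module. -/
def IsSimpleGradedModule (𝒜 : G → AddSubgroup R) {S : Type} [AddCommGroup S] [Module R S]
    (𝒮 : G → AddSubgroup S) : Prop :=
  IsGradedModule 𝒜 𝒮 ∧ Nontrivial S ∧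
    ∀ P : Submodule R S, (P.toAddSubgroup = ⨆ g : G, P.toAddSubgroup ⊓ 𝒮 g) →
      P = ⊥ ∨ P = ⊤

/-- The subgroup of `M →ₗ[R] N` consisting of the graded morphisms `M → N(g)`, i.e. the
degree-`g` component of the graded Hom module `⨁HOM(M, N)`. -/
def gradedHomSubgroup {M N : Type} [AddCommGroup M] [Module R M] [AddCommGroup N] [Module R N]
    (ℳ : G → AddSubgroup M) (𝒩 : G → AddSubgroup N) (g : G) : AddSubgroup (M →ₗ[R] N) where
  carrier := {u | ∀ g' : G, ∀ m ∈ ℳ g', u m ∈ 𝒩 (g + g')}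
  zero_mem' := fun g' m _ => by simp only [LinearMap.zero_apply, ZeroMemClass.zero_mem]
  add_mem' := fun {u v} hu hv g' m hm => by
    rw [LinearMap.add_apply]; exact add_mem (hu g' m hm) (hv g' m hm)
  neg_mem' := fun {u} hu g' m hm => by
    rw [LinearMap.neg_apply]; exact neg_mem (hu g' m hm)

end Defs

/-!
Coarsening has a right adjoint: an `H`-graded module `N` over `R_[ψ]` yields the `G`-graded
`R`-module `ψ^* N = ⨁_g N_{ψ g}`, and an `H`-graded morphism `f : M_[ψ] → ⨁_i N_i` lifts to a
`G`-graded morphism `M → ⨁_i ψ^* N_i` from which `f` is recovered by summing the components of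
each `ψ^* N_i`. So smallness of `M` passes to `M_[ψ]`, and since coarsening does not change the
underlying module, steadiness of `R_[ψ]` makes `M` finitely generated.
-/

section Coarsening

variable {G H M : Type} [AddCommGroup G] [AddCommGroup H] [AddCommGroup M] (ψ : G →+ H)

lemma le_coarsen (ℳ : G → AddSubgroup M) (g : G) : ℳ g ≤ coarsen ψ ℳ (ψ g) :=
  le_biSup ℳ (Set.mem_preimage.2 rfl)

theorem iSupIndep.biSup_fiber {α ι κ : Type*} [CompleteLattice α] [IsModularLattice α]
    [IsCompactlyGenerated α] {f : ι → α} (hf : iSupIndep f) (p : ι → κ) :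
    iSupIndep fun k => ⨆ i ∈ p ⁻¹' {k}, f i := fun _ =>
  (hf.disjoint_biSup_biSup disjoint_compl_right).mono_right <|
    iSup₂_le fun _ hk' => iSup₂_le fun _ hi => le_biSup f fun hik => hk' (hi.symm.trans hik)

theorem isInternal_coarsen [DecidableEq G] [DecidableEq H] {ℳ : G → AddSubgroup M}
    (hℳ : IsInternal ℳ) : IsInternal (coarsen ψ ℳ) := by
  obtain ⟨hind, htop⟩ :=
    (isInternal_submodule_iff_iSupIndep_and_iSup_eq_top fun g => (ℳ g).toIntSubmodule).mp hℳ
  have hcoarsen : ∀ h, (coarsen ψ ℳ h).toIntSubmodule = ⨆ g ∈ ψ ⁻¹' {h}, (ℳ g).toIntSubmodule :=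
    fun h => map_iSup₂ AddSubgroup.toIntSubmodule _
  -- The independence criterion for internal direct sums is stated for submodules.
  show IsInternal fun h => (coarsen ψ ℳ h).toIntSubmodule
  refine isInternal_submodule_of_iSupIndep_of_iSup_eq_top ?_ ?_
  · simpa only [hcoarsen] using hind.biSup_fiber ψ
  · refine eq_top_iff.2 (htop ▸ iSup_le fun g => le_iSup_of_le (ψ g) ?_)
    exact AddSubgroup.toIntSubmodule.monotone (le_coarsen ψ ℳ g)

theorem isGradedModule_coarsen {R : Type} [CommRing R] [Module R M] {𝒜 : G → AddSubgroup R}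
    {ℳ : G → AddSubgroup M} (hℳ : IsGradedModule 𝒜 ℳ) :
    IsGradedModule (coarsen ψ 𝒜) (coarsen ψ ℳ) := by
  refine ⟨fun {h h' r m} hr hm => ?_, ?_⟩
  · have hhom : ∀ g, ψ g = h → ∀ r ∈ 𝒜 g, r • m ∈ coarsen ψ ℳ (h + h') := by
      rintro g rfl r hr
      refine (iSup₂_le fun g' (hg' : ψ g' = h') n hn => ?_ : coarsen ψ ℳ h' ≤
        (coarsen ψ ℳ (ψ g + h')).comap (DistribSMul.toAddMonoidHom M r)) hm
      rw [← hg', ← map_add]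
      exact le_coarsen ψ ℳ _ (hℳ.1 hr hn)
    exact (iSup₂_le fun g hg r hr => hhom g hg r hr : coarsen ψ 𝒜 h ≤
      (coarsen ψ ℳ (h + h')).comap ((smulAddHom R M).flip m)) hr
  · let := Classical.decEq G
    let := Classical.decEq H
    exact isInternal_coarsen ψ hℳ.2

theorem IsGradedModule.gradedSMul_comp {R N : Type} [CommRing R] [AddCommGroup N] [Module R N]
    {𝒜 : G → AddSubgroup R} {𝒩 : H → AddSubgroup N} (h𝒩 : IsGradedModule (coarsen ψ 𝒜) 𝒩) :
    SetLike.GradedSMul 𝒜 fun g => 𝒩 (ψ g) :=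
  ⟨fun {a _ _ _} hr hn => by
    simpa only [vadd_eq_add, map_add] using h𝒩.1 (le_coarsen ψ 𝒜 a hr) hn⟩

end Coarsening

section SummandGrading

variable {κ : Type} [DecidableEq κ] (W : κ → Type) [∀ k, AddCommGroup (W k)]

def summandGrading (k : κ) : AddSubgroup (⨁ k, W k) :=
  (DirectSum.of W k).range

lemma of_mem_summandGrading (k : κ) (w : W k) : DirectSum.of W k w ∈ summandGrading W k :=
  ⟨w, rfl⟩

noncomputable instance : Decomposition (summandGrading W) where
  decompose' := DirectSum.map fun k =>
    (DirectSum.of W k).codRestrict (summandGrading W k) (of_mem_summandGrading W k)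
  left_inv := DFunLike.congr_fun
    (show (DirectSum.coeAddMonoidHom (summandGrading W)).comp (DirectSum.map _) = .id _ from
      DirectSum.addHom_ext fun k w => by
        rw [AddMonoidHom.comp_apply, DirectSum.map_of, DirectSum.coeAddMonoidHom_of]; rfl)
  right_inv := DFunLike.congr_fun
    (show (DirectSum.map _).comp (DirectSum.coeAddMonoidHom (summandGrading W)) = .id _ from
      DirectSum.addHom_ext fun k ⟨_, w, hw⟩ => by
        subst hw
        rw [AddMonoidHom.comp_apply, DirectSum.coeAddMonoidHom_of, DirectSum.map_of]; rfl)

lemma isInternal_summandGrading : IsInternal (summandGrading W) :=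
  Decomposition.isInternal _

end SummandGrading

section GradedSum

variable {G R N : Type} [AddCommGroup G] [DecidableEq G] [CommRing R] {𝒜 : G → AddSubgroup R}
  [GradedRing 𝒜] [AddCommGroup N] [Module R N] (ℬ : G → AddSubgroup N) [SetLike.GradedSMul 𝒜 ℬ]

lemma GradedModule.smul_of_of_mem {r : R} {a b : G} (hr : r ∈ 𝒜 a) (w : ℬ b) :
    letI := GradedModule.isModule 𝒜 ℬ
    r • DirectSum.of (fun g => ℬ g) b w =
      DirectSum.of (fun g => ℬ g) (a + b) ⟨r • (w : N), SetLike.GradedSMul.smul_mem hr w.2⟩ := by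
  show DirectSum.decompose 𝒜 r • DirectSum.of (fun g => ℬ g) b w = _
  rw [DirectSum.decompose_of_mem 𝒜 hr, DirectSum.Gmodule.of_smul_of]
  rfl

lemma isGradedModule_summandGrading :
    letI := GradedModule.isModule 𝒜 ℬ
    IsGradedModule 𝒜 (summandGrading fun g => ℬ g) := by
  let := GradedModule.isModule 𝒜 ℬ
  -- `IsGradedModule` is stated with the classical `DecidableEq G` instance.
  refine ⟨fun {a b r x} hr hx => ?_, by convert isInternal_summandGrading fun g => ℬ g; rfl⟩
  obtain ⟨w, rfl⟩ := hx
  rw [GradedModule.smul_of_of_mem ℬ hr w]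
  exact of_mem_summandGrading _ _ _

end GradedSum

section Lift

variable {G H R M ι : Type} [AddCommGroup G] [AddCommGroup H] [DecidableEq G] [DecidableEq H]
  [CommRing R] (ψ : G →+ H) [AddCommGroup M] [Module R M] (ℳ : G → AddSubgroup M)
  [Decomposition ℳ] {N : ι → Type} [∀ i, AddCommGroup (N i)] [∀ i, Module R (N i)]
  (𝒩 : ∀ i, H → AddSubgroup (N i)) [∀ i, Decomposition (𝒩 i)]

noncomputable def coarsenLiftAddHom (f : M →ₗ[R] ⨁ i, N i) : M →+ ⨁ i, ⨁ g, 𝒩 i (ψ g) :=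
  (DirectSum.toAddMonoid fun g =>
    (DirectSum.map fun i => (DirectSum.of (fun g => 𝒩 i (ψ g)) g).comp
      ((DFinsupp.evalAddMonoidHom (ψ g)).comp (decomposeAddEquiv (𝒩 i)).toAddMonoidHom)).comp
    (f.toAddMonoidHom.comp (ℳ g).subtype)).comp (decomposeAddEquiv ℳ).toAddMonoidHom

variable {ψ ℳ 𝒩} {f : M →ₗ[R] ⨁ i, N i}

lemma coarsenLiftAddHom_apply_of_mem (hf : IsGradedHom (coarsen ψ ℳ) (directSumGrading 𝒩) f)
    {g : G} {m : M} (hm : m ∈ ℳ g) (i : ι) :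
    coarsenLiftAddHom ψ ℳ 𝒩 f m i =
      DirectSum.of (fun g => 𝒩 i (ψ g)) g ⟨f m i, hf _ m (le_coarsen ψ ℳ g hm) i⟩ := by
  simp only [coarsenLiftAddHom, AddMonoidHom.comp_apply, AddEquiv.coe_toAddMonoidHom,
    decomposeAddEquiv_apply, decompose_of_mem ℳ hm, toAddMonoid_of, map_apply]
  exact congrArg _ (Subtype.ext (decompose_of_mem_same _ (hf _ m (le_coarsen ψ ℳ g hm) i)))

lemma coe_coarsenLiftAddHom_apply (hf : IsGradedHom (coarsen ψ ℳ) (directSumGrading 𝒩) f)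
    (m : M) (i : ι) :
    DirectSum.coeAddMonoidHom (fun g => 𝒩 i (ψ g)) (coarsenLiftAddHom ψ ℳ 𝒩 f m i) = f m i := by
  induction m using DirectSum.Decomposition.inductionOn ℳ with
  | zero => simp
  | homogeneous m => rw [coarsenLiftAddHom_apply_of_mem hf m.2, coeAddMonoidHom_of]
  | add m m' hm hm' =>
    rw [map_add, DirectSum.add_apply, map_add, hm, hm', map_add, DirectSum.add_apply]

variable (𝒜 : G → AddSubgroup R) [GradedRing 𝒜] [SetLike.GradedSMul 𝒜 ℳ]
  [∀ i, SetLike.GradedSMul 𝒜 fun g => 𝒩 i (ψ g)]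

lemma coarsenLiftAddHom_smul (hf : IsGradedHom (coarsen ψ ℳ) (directSumGrading 𝒩) f)
    (r : R) (m : M) :
    letI := fun i => GradedModule.isModule 𝒜 fun g => 𝒩 i (ψ g)
    coarsenLiftAddHom ψ ℳ 𝒩 f (r • m) = r • coarsenLiftAddHom ψ ℳ 𝒩 f m := by
  let := fun i => GradedModule.isModule 𝒜 fun g => 𝒩 i (ψ g)
  induction r using DirectSum.Decomposition.inductionOn 𝒜 with
  | zero => rw [zero_smul, map_zero, zero_smul]
  | add r r' hr hr' => rw [add_smul, map_add, hr, hr', add_smul]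
  | homogeneous r =>
    induction m using DirectSum.Decomposition.inductionOn ℳ with
    | zero => rw [smul_zero, map_zero, smul_zero]
    | add m m' hm hm' => rw [smul_add, map_add, hm, hm', map_add, smul_add]
    | homogeneous m =>
      ext i : 1
      rw [coarsenLiftAddHom_apply_of_mem hf (SetLike.GradedSMul.smul_mem r.2 m.2),
        DirectSum.smul_apply, coarsenLiftAddHom_apply_of_mem hf m.2,
        GradedModule.smul_of_of_mem _ r.2]
      congr
      rw [map_smul, DirectSum.smul_apply]

noncomputable def coarsenLift (hf : IsGradedHom (coarsen ψ ℳ) (directSumGrading 𝒩) f) :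
    letI := fun i => GradedModule.isModule 𝒜 fun g => 𝒩 i (ψ g)
    M →ₗ[R] ⨁ i, ⨁ g, 𝒩 i (ψ g) :=
  letI := fun i => GradedModule.isModule 𝒜 fun g => 𝒩 i (ψ g)
  { coarsenLiftAddHom ψ ℳ 𝒩 f with map_smul' := coarsenLiftAddHom_smul 𝒜 hf }

lemma isGradedHom_coarsenLift (hf : IsGradedHom (coarsen ψ ℳ) (directSumGrading 𝒩) f) :
    letI := fun i => GradedModule.isModule 𝒜 fun g => 𝒩 i (ψ g)
    IsGradedHom ℳ (directSumGrading fun i => summandGrading fun g => 𝒩 i (ψ g))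
      (coarsenLift 𝒜 hf) := fun g m hm i => by
  show coarsenLiftAddHom ψ ℳ 𝒩 f m i ∈ _
  rw [coarsenLiftAddHom_apply_of_mem hf hm]
  exact of_mem_summandGrading _ _ _

end Lift

theorem isSmall_coarsen {G H R M : Type} [AddCommGroup G] [AddCommGroup H] [CommRing R]
    [AddCommGroup M] [Module R M] (ψ : G →+ H) {𝒜 : G → AddSubgroup R} (h𝒜 : IsGradedRing 𝒜)
    {ℳ : G → AddSubgroup M} (hℳ : IsGradedModule 𝒜 ℳ) (hsmall : IsSmall 𝒜 ℳ) :
    IsSmall (coarsen ψ 𝒜) (coarsen ψ ℳ) := by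
  let := Classical.decEq G
  let := Classical.decEq H
  let : GradedRing 𝒜 :=
    { one_mem := h𝒜.1, mul_mem := fun _ _ _ _ => h𝒜.2.1,
      toDecomposition := h𝒜.2.2.chooseDecomposition }
  let := hℳ.2.chooseDecomposition
  have : SetLike.GradedSMul 𝒜 ℳ := ⟨fun _ _ _ _ => hℳ.1⟩
  intro ι N _ _ 𝒩 h𝒩 f hf
  let := fun i => (h𝒩 i).2.chooseDecomposition
  have := fun i => (h𝒩 i).gradedSMul_comp ψ
  let := fun i => GradedModule.isModule 𝒜 fun g => 𝒩 i (ψ g)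
  obtain ⟨s, hs⟩ := hsmall ι _ _ (fun i => isGradedModule_summandGrading _)
    (coarsenLift 𝒜 hf) (isGradedHom_coarsenLift 𝒜 hf)
  refine ⟨s, fun m i hi => ?_⟩
  rw [← coe_coarsenLiftAddHom_apply hf, show coarsenLiftAddHom ψ ℳ 𝒩 f m i = 0 from hs m i hi,
    map_zero]

theorem steady_of_coarsening_steady_general
    {G H R : Type} [AddCommGroup G] [AddCommGroup H] [CommRing R]
    (ψ : G →+ H)
    (𝒜 : G → AddSubgroup R) (h𝒜 : IsGradedRing 𝒜)
    (hsteady : IsSteady (coarsen ψ 𝒜)) :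
    IsSteady 𝒜 := fun M _ _ ℳ hℳ hsmall =>
  hsteady M (coarsen ψ ℳ) (isGradedModule_coarsen ψ hℳ) (isSmall_coarsen ψ h𝒜 hℳ hsmall)

/-- **Statement 13** (Proposition, first half): if the `ψ`-coarsening `R_[ψ]` is steady,
then so is `R`. -/
theorem steady_of_coarsening_steady
    {G H R : Type} [AddCommGroup G] [AddCommGroup H] [CommRing R]
    (ψ : G →+ H) (hψ : Function.Surjective ψ)
    (𝒜 : G → AddSubgroup R) (h𝒜 : IsGradedRing 𝒜)
    (hsteady : IsSteady (coarsen ψ 𝒜)) :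
    IsSteady 𝒜 :=
  steady_of_coarsening_steady_general ψ 𝒜 h𝒜 hsteady
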